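/- Let v, β ∈ ℝ with v ≠ 0, and define f, g : ℝ → ℝ by f(E) = (1 − v²(1 + E²))² and g(E) = ((1 − v²)(1 − βv²)/v²) E² + ((3βv² + v² − 4)/6) E⁴ + (v²/9) E⁶. Suppose E, Φ : ℝ → ℝ are differentiable and satisfy, for all ξ ∈ ℝ, 1 − v²(1 + E(ξ)²) ≠ 0, E'(ξ) = Φ(ξ), and Φ'(ξ) = (2v²E(ξ)Φ(ξ)² − (1/v² − β)E(ξ) + E(ξ)³/3)/(1 − v²(1 + E(ξ)²)). Then the function ξ ↦ f(E(ξ))Φ(ξ)² + g(E(ξ)) is constant on ℝ. -/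

import Mathlib

/-!
Along a solution of `E' = Φ`, the derivative of `f(E)Φ² + g(E)` is
`Φ (f'(E)Φ² + g'(E) + 2 f(E)Φ')`, so the energy is conserved as soon as
`2 f(E) Φ' = -(f'(E)Φ² + g'(E))`. For the traveling-wave system this is an
algebraic identity once the denominator `1 − v²(1 + E²)` is cleared: `f` is its square.
-/

theorem hasDerivAt_energy {f g E Φ : ℝ → ℝ} {f' g' Φ' ξ : ℝ}
    (hf : HasDerivAt f f' (E ξ)) (hg : HasDerivAt g g' (E ξ))
    (hE : HasDerivAt E (Φ ξ) ξ) (hΦ : HasDerivAt Φ Φ' ξ) :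
    HasDerivAt (fun ξ => f (E ξ) * Φ ξ ^ 2 + g (E ξ))
      (Φ ξ * (f' * Φ ξ ^ 2 + g' + 2 * f (E ξ) * Φ')) ξ := by
  refine (((hf.comp ξ hE).mul (hΦ.fun_pow 2)).add (hg.comp ξ hE)).congr_deriv ?_
  rw [Function.comp_apply]
  ring

theorem energy_eq_of_hasDerivAt {f g f' g' E Φ Φ' : ℝ → ℝ}
    (hf : ∀ x, HasDerivAt f (f' x) x) (hg : ∀ x, HasDerivAt g (g' x) x)
    (hE : ∀ ξ, HasDerivAt E (Φ ξ) ξ) (hΦ : ∀ ξ, HasDerivAt Φ (Φ' ξ) ξ)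
    (heq : ∀ ξ, 2 * f (E ξ) * Φ' ξ = -(f' (E ξ) * Φ ξ ^ 2 + g' (E ξ)))
    (ξ₁ ξ₂ : ℝ) :
    f (E ξ₁) * Φ ξ₁ ^ 2 + g (E ξ₁) = f (E ξ₂) * Φ ξ₂ ^ 2 + g (E ξ₂) := by
  have hderiv (ξ : ℝ) : HasDerivAt (fun ξ => f (E ξ) * Φ ξ ^ 2 + g (E ξ)) 0 ξ :=
    (hasDerivAt_energy (hf (E ξ)) (hg (E ξ)) (hE ξ) (hΦ ξ)).congr_deriv (by rw [heq ξ]; ring)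
  exact is_const_of_deriv_eq_zero (fun ξ => (hderiv ξ).differentiableAt)
    (fun ξ => (hderiv ξ).deriv) ξ₁ ξ₂

theorem hasDerivAt_sq_one_sub_mul_one_add_sq (c x : ℝ) :
    HasDerivAt (fun E => (1 - c * (1 + E ^ 2)) ^ 2) (-4 * c * x * (1 - c * (1 + x ^ 2))) x := by
  have hx := hasDerivAt_id' x
  refine ((((hx.fun_pow 2).const_add 1).const_mul c).const_sub 1 |>.fun_pow 2).congr_deriv ?_
  ring

theorem hasDerivAt_even_sextic (a b c x : ℝ) :
    HasDerivAt (fun E => a * E ^ 2 + b * E ^ 4 + c * E ^ 6)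
      (2 * a * x + 4 * b * x ^ 3 + 6 * c * x ^ 5) x := by
  have hx := hasDerivAt_id' x
  refine ((((hx.fun_pow 2).const_mul a).add ((hx.fun_pow 4).const_mul b)).add
    ((hx.fun_pow 6).const_mul c)).congr_deriv ?_
  ring

/-- Conservation of the traveling-wave Hamiltonian `H = f(E)Φ² + g(E)` along
solutions of the rescaled traveling-wave system `E' = Φ`,
`Φ' = (2v²EΦ² − (1/v² − β)E + E³/3)/(1 − v²(1 + E²))`. -/
theorem traveling_wave_hamiltonian_conserved (v β : ℝ) (hv : v ≠ 0)
    (f g : ℝ → ℝ)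
    (hf : ∀ E, f E = (1 - v ^ 2 * (1 + E ^ 2)) ^ 2)
    (hg : ∀ E, g E = (1 - v ^ 2) * (1 - β * v ^ 2) / v ^ 2 * E ^ 2
      + (3 * β * v ^ 2 + v ^ 2 - 4) / 6 * E ^ 4 + v ^ 2 / 9 * E ^ 6)
    (E Φ : ℝ → ℝ)
    (hden : ∀ ξ : ℝ, 1 - v ^ 2 * (1 + E ξ ^ 2) ≠ 0)
    (hE : ∀ ξ : ℝ, HasDerivAt E (Φ ξ) ξ)
    (hΦ : ∀ ξ : ℝ, HasDerivAt Φ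
      ((2 * v ^ 2 * E ξ * Φ ξ ^ 2 - (1 / v ^ 2 - β) * E ξ + E ξ ^ 3 / 3)
        / (1 - v ^ 2 * (1 + E ξ ^ 2))) ξ) :
    ∀ ξ₁ ξ₂ : ℝ, f (E ξ₁) * Φ ξ₁ ^ 2 + g (E ξ₁)
      = f (E ξ₂) * Φ ξ₂ ^ 2 + g (E ξ₂) := by
  obtain rfl : f = _ := funext hf
  obtain rfl : g = _ := funext hg
  refine energy_eq_of_hasDerivAt (hasDerivAt_sq_one_sub_mul_one_add_sq _)
    (hasDerivAt_even_sextic _ _ _) hE hΦ fun ξ => ?_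
  have hD := hden ξ
  field_simp
  ring
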